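/- Let p, q ∈ ℤ. Then ∂_0(c^{-1}_p · c^1_q) = 2(a^1_{p-1}·c^2_q + a^1_p·c^2_{q-1}), ∂_1(c^{-1}_p · c^1_q) = 2(a^0_{p-1}·c^2_q + a^0_p·c^2_{q-1}), and consequently (∂_0 + ∂_1)(c^{-1}_p · c^1_q) = 2(c^1_{p-1}·c^2_q + c^1_p·c^2_{q-1}). -/

import Mathlib

/-!
The polynomial ring `R2 = ℚ[c₁, c₂, …, t₁, t₂, …]`: the variable `Sum.inl p` (for `p ≥ 1`)
is `c_p`, and `Sum.inr i` (for `i ≥ 1`) is `t_i`.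
-/

noncomputable section
open MvPolynomial Finset
open scoped Classical

abbrev R2 : Type := MvPolynomial (ℕ ⊕ ℕ) ℚ

/-- The variable `t_i`. -/
def Tv (i : ℕ) : R2 := X (Sum.inr i)

/-- `c_p`, with the conventions `c_0 = 1` and `c_p = 0` for `p < 0`. -/
def Cv (p : ℤ) : R2 := if p < 0 then 0 else if p = 0 then 1 else X (Sum.inl p.toNat)

/-- The complete homogeneous symmetric polynomial `h_j` evaluated on a list. -/
def hfun : List R2 → ℕ → R2
  | [], j => if j = 0 then 1 else 0
  | a :: L, j => ∑ i ∈ Finset.range (j + 1), a ^ i * hfun L (j - i)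

/-- The elementary symmetric polynomial `e_j` evaluated on a list. -/
def efun : List R2 → ℕ → R2
  | [], j => if j = 0 then 1 else 0
  | _ :: _, 0 => 1
  | a :: L, j + 1 => efun L (j + 1) + a * efun L j

/-- The list `(-t_1, …, -t_r)`. -/
def negT (r : ℕ) : List R2 := (List.range r).map fun i => -Tv (i + 1)

/-- `h^r_j(-t)`: complete homogeneous for `r ≥ 0`, elementary `e^{-r}_j(-t)` for `r < 0`. -/
def hmt (r : ℤ) (j : ℕ) : R2 :=
  if 0 ≤ r then hfun (negT r.toNat) j else efun (negT (-r).toNat) j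

/-- `c^r_p := Σ_{j=0}^p c_{p-j} h^r_j(-t)`. -/
def cc (r p : ℤ) : R2 := ∑ j ∈ Finset.range (p.toNat + 1), Cv (p - j) * hmt r j

/-- `a^s_p := (1/2)c_p + Σ_{j=1}^p c_{p-j} h^s_j(-t)`. -/
def aa (s p : ℤ) : R2 :=
  C (1/2 : ℚ) * Cv p + ∑ j ∈ Finset.Icc 1 p.toNat, Cv (p - j) * hmt s j

/-- Images of the variables under the automorphism `s_i`. -/
def sImg : ℕ → ℕ ⊕ ℕ → R2
  | 0, Sum.inr j => if j = 1 then -Tv 2 else if j = 2 then -Tv 1 else Tv j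
  | 0, Sum.inl p =>
      if p = 0 then X (Sum.inl 0)
      else Cv p - 2 * (Tv 1 + Tv 2) *
        ∑ j ∈ Finset.range p, (-1 : R2) ^ j *
          (∑ a ∈ Finset.range (j + 1), Tv 1 ^ a * Tv 2 ^ (j - a)) * Cv ((p : ℤ) - 1 - j)
  | i + 1, Sum.inr j =>
      if j = i + 1 then Tv (i + 2) else if j = i + 2 then Tv (i + 1) else Tv j
  | _ + 1, Sum.inl p => X (Sum.inl p)

/-- The ring automorphism `s_i` of `R2`. -/
def sA (i : ℕ) : R2 →ₐ[ℚ] R2 := aeval (sImg i)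

/-- The fraction field of `R2`. -/
abbrev KK : Type := FractionRing R2

/-- The canonical embedding of `R2` into its fraction field. -/
def toK : R2 →+* KK := algebraMap R2 KK

/-- The denominator `t_1 + t_2` (for `i = 0`) resp. `t_{i+1} - t_i` (for `i ≥ 1`). -/
def dden (i : ℕ) : R2 := if i = 0 then Tv 1 + Tv 2 else Tv (i + 1) - Tv i

/-- The divided difference operator `∂_i`, with values in the fraction field. -/
def dd (i : ℕ) (f : R2) : KK := (toK f - toK (sA i f)) / toK (dden i)

/-!
Everything reduces to the recursions `c_q = c^1_q + t_1 c^1_{q-1}`, `c^1_q = c^2_q + t_2 c^2_{q-1}`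
and `c^{-1}_p = c_p - t_1 c_{p-1}`, together with `2 a^s_p = 2 c^s_p - c_p`. The reflection `s_1`
fixes `c` and the symmetric `c^2`, while `s_0 c_p = c_p - 2(t_1+t_2) c^2_{p-1}` is the coefficient
form of the generating series defining `s_0`, because
`(1-t_1u)(1-t_2u)/((1+t_1u)(1+t_2u)) = 1 - 2(t_1+t_2)u · Σ_j h_j(-t_1,-t_2) u^j`;
by induction on `q` this gives `s_0 c^1_q = c^2_q - t_1 c^2_{q-1}`. So for `f = c^{-1}_p c^1_q`
the difference `f - s_i f` is an explicit polynomial multiple of the denominator of `∂_i`, an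
identity linear in `c` and `c^2`. The third formula is the sum of the first two, as
`a^1_p + a^0_p = c^1_p`.
-/

lemma Cv_of_neg {p : ℤ} (hp : p < 0) : Cv p = 0 := by simp [Cv, hp]

lemma Cv_zero : Cv 0 = 1 := by simp [Cv]

lemma hfun_zero (L : List R2) : hfun L 0 = 1 := by
  induction L with
  | nil => simp [hfun]
  | cons a L ih => simp [hfun, ih]

lemma hfun_nil (j : ℕ) : hfun [] j = if j = 0 then 1 else 0 := by simp [hfun]

lemma hfun_singleton (a : R2) (j : ℕ) : hfun [a] j = a ^ j := by
  rw [hfun, sum_eq_single j]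
  · simp [hfun_nil]
  · intro i hi hij
    rw [hfun_nil, if_neg (by grind), mul_zero]
  · simp

lemma hfun_pair (a b : R2) (j : ℕ) :
    hfun [a, b] j = ∑ x ∈ antidiagonal j, a ^ x.1 * b ^ x.2 := by
  rw [Nat.sum_antidiagonal_eq_sum_range_succ_mk, hfun]
  simp only [hfun_singleton]

lemma efun_zero (L : List R2) : efun L 0 = 1 := by
  cases L <;> simp [efun]

lemma hmt_zero_right (r : ℤ) : hmt r 0 = 1 := by
  unfold hmt; split <;> simp [hfun_zero, efun_zero]

lemma hmt_zero_left (j : ℕ) : hmt 0 j = if j = 0 then 1 else 0 := by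
  simp [hmt, negT, hfun_nil]

lemma hmt_one (j : ℕ) : hmt 1 j = (-Tv 1) ^ j := by
  simp [hmt, negT, hfun_singleton]

lemma hmt_two (j : ℕ) :
    hmt 2 j = ∑ x ∈ antidiagonal j, (-Tv 1) ^ x.1 * (-Tv 2) ^ x.2 := by
  simp [hmt, negT, List.range_succ, hfun_pair]

lemma hmt_two_eq_neg_one_pow_mul (j : ℕ) :
    hmt 2 j = (-1) ^ j * ∑ a ∈ range (j + 1), Tv 1 ^ a * Tv 2 ^ (j - a) := by
  rw [hmt_two, Nat.sum_antidiagonal_eq_sum_range_succ_mk, mul_sum]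
  refine sum_congr rfl fun a ha => ?_
  have hsplit : (-1 : R2) ^ j = (-1) ^ a * (-1) ^ (j - a) := by
    rw [← pow_add, Nat.add_sub_cancel' (by simpa [Nat.lt_succ_iff] using ha)]
  rw [neg_pow (Tv 1), neg_pow (Tv 2), hsplit]
  ring

lemma hmt_neg_one_succ (j : ℕ) : hmt (-1) (j + 1) = hmt 0 (j + 1) + -Tv 1 * hmt 0 j := by
  cases j <;> simp [hmt, negT, efun, hfun_nil]

lemma hmt_zero_succ (j : ℕ) : hmt 0 (j + 1) = hmt 1 (j + 1) + Tv 1 * hmt 1 j := by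
  rw [hmt_zero_left, if_neg j.succ_ne_zero, hmt_one, hmt_one, pow_succ]
  ring

lemma hmt_one_succ (j : ℕ) : hmt 1 (j + 1) = hmt 2 (j + 1) + Tv 2 * hmt 2 j := by
  rw [hmt_one, hmt_two, hmt_two, Nat.sum_antidiagonal_succ', mul_sum, pow_zero, mul_one,
    add_assoc, ← sum_add_distrib, sum_eq_zero (fun x _ => by ring), add_zero]

lemma cc_of_neg (r : ℤ) {p : ℤ} (hp : p < 0) : cc r p = 0 := by
  simp [cc, show p.toNat = 0 by omega, Cv_of_neg hp]

lemma cc_zero_right (r : ℤ) : cc r 0 = 1 := by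
  simp [cc, Cv_zero, hmt_zero_right]

lemma cc_eq_sum_range (r p : ℤ) {N : ℕ} (hN : p.toNat < N) :
    cc r p = ∑ j ∈ range N, Cv (p - j) * hmt r j := by
  refine sum_subset (range_subset_range.mpr hN) fun j _ hj => ?_
  rw [Cv_of_neg (by simp at hj; omega), zero_mul]

lemma cc_eq_cc_add_mul_cc_sub_one {r r' s : ℤ} (x : R2)
    (h : ∀ j : ℕ, hmt r' (j + 1) = hmt r (j + 1) + x * hmt s j) (q : ℤ) :
    cc r' q = cc r q + x * cc s (q - 1) := by
  have hN : q.toNat < q.toNat + 1 + 1 := by omega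
  rw [cc_eq_sum_range r' q hN, cc_eq_sum_range r q hN,
    cc_eq_sum_range s (q - 1) (by omega : (q - 1).toNat < q.toNat + 1),
    sum_range_succ' _ (q.toNat + 1), sum_range_succ' _ (q.toNat + 1), mul_sum, hmt_zero_right,
    hmt_zero_right]
  simp only [h, mul_add, sum_add_distrib, mul_left_comm _ x, Nat.cast_add, Nat.cast_one,
    sub_add_eq_sub_sub, sub_right_comm _ _ (1 : ℤ)]
  ring

lemma cc_zero_left (q : ℤ) : cc 0 q = Cv q := by
  rw [cc_eq_sum_range 0 q (Nat.lt_succ_self _), sum_range_succ']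
  simp [hmt_zero_left, hmt_zero_right]

lemma Cv_eq_cc_one (q : ℤ) : Cv q = cc 1 q + Tv 1 * cc 1 (q - 1) := by
  rw [← cc_zero_left]
  exact cc_eq_cc_add_mul_cc_sub_one _ hmt_zero_succ q

lemma cc_one_eq_cc_two (q : ℤ) : cc 1 q = cc 2 q + Tv 2 * cc 2 (q - 1) :=
  cc_eq_cc_add_mul_cc_sub_one _ hmt_one_succ q

lemma cc_neg_one (p : ℤ) : cc (-1) p = Cv p - Tv 1 * Cv (p - 1) := by
  rw [← cc_zero_left, ← cc_zero_left, cc_eq_cc_add_mul_cc_sub_one _ hmt_neg_one_succ p]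
  ring

lemma Cv_eq_cc_two (q : ℤ) :
    Cv q = cc 2 q + (Tv 1 + Tv 2) * cc 2 (q - 1) + Tv 1 * Tv 2 * cc 2 (q - 1 - 1) := by
  rw [Cv_eq_cc_one, cc_one_eq_cc_two, cc_one_eq_cc_two (q - 1)]
  ring

lemma two_mul_aa (r p : ℤ) : 2 * aa r p = 2 * cc r p - Cv p := by
  have h2 : (2 : R2) * C (1 / 2 : ℚ) = 1 := by
    rw [← map_ofNat C 2, ← map_mul]; norm_num
  rw [cc_eq_sum_range r p (Nat.lt_succ_self _), sum_range_succ', aa,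
    ← Ico_add_one_right_eq_Icc, sum_Ico_eq_sum_range, Nat.add_sub_cancel]
  simp only [hmt_zero_right, Nat.cast_zero, sub_zero, mul_one, add_comm 1]
  linear_combination (Cv p) * h2

lemma two_mul_aa_zero (p : ℤ) : 2 * aa 0 p = Cv p := by
  rw [two_mul_aa, cc_zero_left]
  ring

lemma sA_X (i : ℕ) (v : ℕ ⊕ ℕ) : sA i (X v) = sImg i v := aeval_X _ _

lemma sA_zero_Tv_one : sA 0 (Tv 1) = -Tv 2 := sA_X _ _

lemma sA_one_Tv_one : sA 1 (Tv 1) = Tv 2 := sA_X _ _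

lemma sA_one_Tv_two : sA 1 (Tv 2) = Tv 1 := sA_X _ _

lemma sA_one_Cv (p : ℤ) : sA 1 (Cv p) = Cv p := by
  unfold Cv
  split_ifs
  · exact map_zero _
  · exact map_one _
  · exact sA_X _ _

lemma sA_one_hmt_two (j : ℕ) : sA 1 (hmt 2 j) = hmt 2 j := by
  rw [hmt_two, map_sum, ← Nat.sum_antidiagonal_swap]
  refine sum_congr rfl fun x _ => ?_
  rw [map_mul, map_pow, map_pow, map_neg, map_neg, sA_one_Tv_one, sA_one_Tv_two, mul_comm]
  rfl

lemma sA_one_cc_two (q : ℤ) : sA 1 (cc 2 q) = cc 2 q := by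
  simp only [cc, map_sum, map_mul, sA_one_Cv, sA_one_hmt_two]

lemma sA_zero_Cv (p : ℤ) : sA 0 (Cv p) = Cv p - 2 * (Tv 1 + Tv 2) * cc 2 (p - 1) := by
  rcases lt_trichotomy p 0 with hp | rfl | hp
  · simp [Cv_of_neg hp, cc_of_neg 2 (by omega : p - 1 < 0)]
  · simp [Cv_zero, cc_of_neg]
  obtain ⟨n, rfl⟩ : ∃ n : ℕ, p = (n + 1 : ℕ) := ⟨p.toNat - 1, by omega⟩
  have hX : Cv (n + 1 : ℕ) = X (Sum.inl (n + 1)) := by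
    rw [Cv, if_neg (by omega), if_neg (by omega), Int.toNat_natCast]
  rw [hX, sA_X, ← hX, cc_eq_sum_range 2 _ (by omega : ((n + 1 : ℕ) - 1 : ℤ).toNat < n + 1)]
  simp only [sImg, Nat.add_one_ne_zero, if_false, hmt_two_eq_neg_one_pow_mul]
  congr 2
  exact sum_congr rfl fun j _ => mul_comm _ _

lemma sA_zero_cc_one (q : ℤ) : sA 0 (cc 1 q) = cc 2 q - Tv 1 * cc 2 (q - 1) := by
  induction q using Int.induction_on with
  | zero => simp [cc_zero_right, cc_of_neg]
  | succ n ih =>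
    have hrec : cc 1 (n + 1) = Cv (n + 1) - Tv 1 * cc 1 n := by
      rw [Cv_eq_cc_one (n + 1), add_sub_cancel_right]; ring
    rw [hrec, map_sub, map_mul, sA_zero_Tv_one, sA_zero_Cv, add_sub_cancel_right, ih,
      Cv_eq_cc_two, add_sub_cancel_right]
    ring
  | pred n _ =>
    rw [cc_of_neg 1 (by omega), cc_of_neg 2 (by omega), cc_of_neg 2 (by omega)]
    simp

lemma cc_mul_cc_sub_sA_zero (p q : ℤ) :
    cc (-1) p * cc 1 q - sA 0 (cc (-1) p * cc 1 q) =
      2 * (aa 1 (p - 1) * cc 2 q + aa 1 p * cc 2 (q - 1)) * (Tv 1 + Tv 2) := by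
  rw [map_mul, cc_neg_one, map_sub, map_mul, sA_zero_Tv_one, sA_zero_Cv, sA_zero_Cv,
    sA_zero_cc_one]
  linear_combination (Cv p - Tv 1 * Cv (p - 1)) * cc_one_eq_cc_two q
    - (Tv 1 + Tv 2) * cc 2 q * two_mul_aa 1 (p - 1) - (Tv 1 + Tv 2) * cc 2 (q - 1) * two_mul_aa 1 p
    - 2 * (Tv 1 + Tv 2) * cc 2 q * cc_one_eq_cc_two (p - 1)
    - 2 * (Tv 1 + Tv 2) * cc 2 (q - 1) * cc_one_eq_cc_two p
    + 2 * (Tv 1 + Tv 2) * cc 2 (q - 1) * Cv_eq_cc_two p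

lemma cc_mul_cc_sub_sA_one (p q : ℤ) :
    cc (-1) p * cc 1 q - sA 1 (cc (-1) p * cc 1 q) =
      2 * (aa 0 (p - 1) * cc 2 q + aa 0 p * cc 2 (q - 1)) * (Tv 2 - Tv 1) := by
  rw [map_mul, cc_neg_one, cc_one_eq_cc_two, map_sub, map_mul, map_add, map_mul, sA_one_Tv_one,
    sA_one_Tv_two, sA_one_Cv, sA_one_Cv, sA_one_cc_two, sA_one_cc_two]
  linear_combination -(Tv 2 - Tv 1) * cc 2 q * two_mul_aa_zero (p - 1)
    - (Tv 2 - Tv 1) * cc 2 (q - 1) * two_mul_aa_zero p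

lemma dden_ne_zero (i : ℕ) : dden i ≠ 0 := by
  intro h
  have := congrArg (eval fun v => if v = Sum.inr (i + 1) then (1 : ℚ) else 0) h
  rcases i with _ | i <;> simp [dden, Tv] at this

lemma dd_eq_toK_of_sub_eq_mul {i : ℕ} {f g : R2} (h : f - sA i f = g * dden i) :
    dd i f = toK g := by
  have hden : toK (dden i) ≠ 0 :=
    (map_ne_zero_iff toK (IsFractionRing.injective R2 KK)).mpr (dden_ne_zero i)
  rw [dd, div_eq_iff hden, ← map_sub, ← map_mul, h]

theorem statement7 (p q : ℤ) :
    dd 0 (cc (-1) p * cc 1 q) = toK (2 * (aa 1 (p - 1) * cc 2 q + aa 1 p * cc 2 (q - 1))) ∧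
    dd 1 (cc (-1) p * cc 1 q) = toK (2 * (aa 0 (p - 1) * cc 2 q + aa 0 p * cc 2 (q - 1))) ∧
    dd 0 (cc (-1) p * cc 1 q) + dd 1 (cc (-1) p * cc 1 q) =
      toK (2 * (cc 1 (p - 1) * cc 2 q + cc 1 p * cc 2 (q - 1))) := by
  have h0 := dd_eq_toK_of_sub_eq_mul (cc_mul_cc_sub_sA_zero p q)
  have h1 := dd_eq_toK_of_sub_eq_mul (cc_mul_cc_sub_sA_one p q)
  refine ⟨h0, h1, ?_⟩
  rw [h0, h1, ← map_add]
  congr 1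
  linear_combination cc 2 q * (two_mul_aa 1 (p - 1) + two_mul_aa_zero (p - 1))
    + cc 2 (q - 1) * (two_mul_aa 1 p + two_mul_aa_zero p)
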